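/- arXiv:1912.03646 — 3 statements merged into one kernel-verified Lean document; each statement's English description precedes it below -/
import Mathlib

section
/- Let M ≥ 2, K ≥ 1 and d ≥ 1, let U : 𝒦 → Matrix 𝒮 𝒮 ℂ be a family of unitary matrices with associated privacy test Π, and let γ := W · (Φ ⊗ ω) · Wᴴ be the M-partite private state built from a density matrix ω on 𝒮. Then every density matrix ρ on 𝒦 × 𝒮 satisfies Re Tr[Π · ρ] ≥ F(γ, ρ). In particular, if F(γ, ρ) ≥ 1 − ε for some ε ∈ [0,1], then ρ passes the γ-privacy test with success probability Re Tr[Π · ρ] ≥ 1 − ε. -/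
open Matrix Kronecker
open scoped ComplexOrder

open scoped Classical in
noncomputable def matSqrt {n : Type*} [Fintype n] [DecidableEq n] (A : Matrix n n ℂ) :
    Matrix n n ℂ :=
  if h : A.PosSemidef then
    (h.1.eigenvectorUnitary : Matrix n n ℂ) *
      Matrix.diagonal ((↑) ∘ (Real.sqrt ·) ∘ h.1.eigenvalues) *
      (star h.1.eigenvectorUnitary : Matrix n n ℂ)
  else 0

noncomputable def rootFidelity {n : Type*} [Fintype n] [DecidableEq n]
    (ρ σ : Matrix n n ℂ) : ℝ :=
  (matSqrt (matSqrt σ * ρ * matSqrt σ)).trace.re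

noncomputable def fidelity {n : Type*} [Fintype n] [DecidableEq n]
    (ρ σ : Matrix n n ℂ) : ℝ :=
  (rootFidelity ρ σ) ^ 2

noncomputable def traceNorm {n : Type*} [Fintype n] [DecidableEq n] (A : Matrix n n ℂ) : ℝ :=
  (matSqrt (Aᴴ * A)).trace.re

/-- The set of attainable type-II error values in hypothesis testing. -/
def testValues {n : Type*} [Fintype n] [DecidableEq n] (ρ σ : Matrix n n ℂ) (ε : ℝ) :
    Set ℝ :=
  { x | ∃ Λ : Matrix n n ℂ, Λ.PosSemidef ∧ (1 - Λ).PosSemidef ∧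
      1 - ε ≤ (Λ * ρ).trace.re ∧ x = (Λ * σ).trace.re }

/-- ε-hypothesis-testing relative entropy. -/
noncomputable def Dh {n : Type*} [Fintype n] [DecidableEq n]
    (ρ σ : Matrix n n ℂ) (ε : ℝ) : ℝ :=
  - Real.logb 2 (sInf (testValues ρ σ ε))

/-- GHZ unit vector. -/
noncomputable def ghz (M K : ℕ) : (Fin M → Fin K) → ℂ :=
  fun f => if ∃ c, ∀ m, f m = c then ((Real.sqrt K : ℂ))⁻¹ else 0

/-- GHZ rank-one projection. -/
noncomputable def ghzProj (M K : ℕ) : Matrix (Fin M → Fin K) (Fin M → Fin K) ℂ :=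
  Matrix.vecMulVec (ghz M K) (star ∘ ghz M K)

/-- The twisting unitary. -/
def twist (M K d : ℕ)
    (U : (Fin M → Fin K) → Matrix (Fin M → Fin d) (Fin M → Fin d) ℂ) :
    Matrix ((Fin M → Fin K) × (Fin M → Fin d)) ((Fin M → Fin K) × (Fin M → Fin d)) ℂ :=
  Matrix.of fun p q => if p.1 = q.1 then U p.1 p.2 q.2 else 0

/-- The privacy test `Π = W (Φ ⊗ 1) Wᴴ`. -/
noncomputable def privacyTest (M K d : ℕ)
    (U : (Fin M → Fin K) → Matrix (Fin M → Fin d) (Fin M → Fin d) ℂ) :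
    Matrix ((Fin M → Fin K) × (Fin M → Fin d)) ((Fin M → Fin K) × (Fin M → Fin d)) ℂ :=
  twist M K d U * (ghzProj M K ⊗ₖ (1 : Matrix (Fin M → Fin d) (Fin M → Fin d) ℂ)) *
    (twist M K d U)ᴴ

/-- The private state `γ = W (Φ ⊗ ω) Wᴴ`. -/
noncomputable def privateState (M K d : ℕ)
    (U : (Fin M → Fin K) → Matrix (Fin M → Fin d) (Fin M → Fin d) ℂ)
    (ω : Matrix (Fin M → Fin d) (Fin M → Fin d) ℂ) :
    Matrix ((Fin M → Fin K) × (Fin M → Fin d)) ((Fin M → Fin K) × (Fin M → Fin d)) ℂ :=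
  twist M K d U * (ghzProj M K ⊗ₖ ω) * (twist M K d U)ᴴ

/-- A vector on `𝒦 × 𝒮` is product across the bipartition `J | Jᶜ` of the parties. -/
def IsProductAcross {M K d : ℕ} (J : Set (Fin M))
    (v : (Fin M → Fin K) × (Fin M → Fin d) → ℂ) : Prop :=
  ∃ (v₁ : ((↥J) → Fin K) × ((↥J) → Fin d) → ℂ)
    (v₂ : ((↥(Jᶜ)) → Fin K) × ((↥(Jᶜ)) → Fin d) → ℂ),
    ∀ (f : Fin M → Fin K) (x : Fin M → Fin d),
      v (f, x) = v₁ (fun m => f m.1, fun m => x m.1) * v₂ (fun m => f m.1, fun m => x m.1)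

/-- Biseparability: a finite convex combination of pure states, each product across
some nontrivial bipartition of the parties. -/
def Biseparable {M K d : ℕ}
    (σ : Matrix ((Fin M → Fin K) × (Fin M → Fin d))
      ((Fin M → Fin K) × (Fin M → Fin d)) ℂ) : Prop :=
  ∃ (N : ℕ) (p : Fin N → ℝ) (w : Fin N → ((Fin M → Fin K) × (Fin M → Fin d)) → ℂ)
    (J : Fin N → Set (Fin M)),
    (∀ t, 0 ≤ p t) ∧ (∑ t, p t = 1) ∧
    (∀ t, ∑ i, ‖w t i‖ ^ 2 = 1) ∧
    (∀ t, J t ≠ ∅ ∧ J t ≠ Set.univ ∧ IsProductAcross (J t) (w t)) ∧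
    σ = ∑ t, (p t : ℂ) • Matrix.vecMulVec (w t) (star ∘ w t)

/-- Partial trace over the second tensor factor. -/
noncomputable def partialTrace₂ {A B : Type*} [Fintype B] (τ : Matrix (A × B) (A × B) ℂ) :
    Matrix A A ℂ :=
  Matrix.of fun a a' => ∑ b, τ (a, b) (a', b)

/-- Matrix logarithm of a Hermitian matrix via the spectral functional calculus. -/
noncomputable def matLog {n : Type*} [Fintype n] [DecidableEq n] (A : Matrix n n ℂ) :
    Matrix n n ℂ :=
  if hA : A.IsHermitian then
    (hA.eigenvectorUnitary : Matrix n n ℂ) *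
      Matrix.diagonal (fun i => (Real.log (hA.eigenvalues i) : ℂ)) *
      (star hA.eigenvectorUnitary : Matrix n n ℂ)
  else 0

/-!
Since `γ Π = γ` and `Π` is an orthogonal projection, also `√γ Π = √γ`, hence
`√F(γ, ρ) = ‖√γ √ρ‖₁ = ‖√γ · Π √ρ‖₁ ≤ ‖√γ‖₂ ‖Π √ρ‖₂ = √(Tr γ) · √(Tr Π ρ) = √(Tr Π ρ)`.
The Hölder step `‖Y Z‖₁ ≤ ‖Y‖₂ ‖Z‖₂` writes `|Y Z| = Wᴴ Y Z` with a partial isometry `W`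
(polar decomposition) and applies Cauchy–Schwarz for the Hilbert–Schmidt inner product.
-/

open scoped MatrixOrder

section MatSqrt

variable {n : Type*} [Fintype n] [DecidableEq n]

lemma matSqrt_eq_conjStarAlgAut {A : Matrix n n ℂ} (hA : A.PosSemidef) :
    matSqrt A = Unitary.conjStarAlgAut ℂ _ hA.1.eigenvectorUnitary
      (diagonal fun i => (√(hA.1.eigenvalues i) : ℂ)) := by
  rw [matSqrt, dif_pos hA]
  rfl

lemma posSemidef_matSqrt (A : Matrix n n ℂ) : (matSqrt A).PosSemidef := by
  unfold matSqrt
  split_ifs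
  · exact (posSemidef_diagonal_iff.mpr fun i =>
      Complex.zero_le_real.mpr (Real.sqrt_nonneg _)).mul_mul_conjTranspose_same _
  · exact .zero

lemma matSqrt_mul_self {A : Matrix n n ℂ} (hA : A.PosSemidef) : matSqrt A * matSqrt A = A := by
  rw [matSqrt_eq_conjStarAlgAut hA, ← map_mul, diagonal_mul_diagonal]
  convert hA.1.spectral_theorem.symm using 3
  ext i
  simp [← Complex.ofReal_mul, Real.mul_self_sqrt (hA.eigenvalues_nonneg i)]

lemma matSqrt_mul_eq_self {A B : Matrix n n ℂ} (hA : A.PosSemidef) (hB : B.IsHermitian)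
    (hAB : A * B = A) : matSqrt A * B = matSqrt A := by
  have hS := (posSemidef_matSqrt A).1
  have h : (matSqrt A * (1 - B))ᴴ * (matSqrt A * (1 - B)) = 0 := by
    rw [conjTranspose_mul, hS.eq, conjTranspose_sub, conjTranspose_one, hB.eq, mul_assoc,
      ← mul_assoc (matSqrt A), matSqrt_mul_self hA, mul_sub, mul_one, hAB, sub_self, mul_zero]
  rw [conjTranspose_mul_self_eq_zero, mul_sub, mul_one, sub_eq_zero] at h
  exact h.symm

end MatSqrt

lemma Matrix.IsHermitian.exists_pseudoinverse {𝕜 n : Type*} [RCLike 𝕜] [Fintype n]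
    [DecidableEq n] {S : Matrix n n 𝕜} (hS : S.IsHermitian) :
    ∃ B : Matrix n n 𝕜, B.IsHermitian ∧ B * S * S = S ∧ B * S * B = B := by
  obtain ⟨U, d, rfl⟩ : ∃ (U : unitary (Matrix n n 𝕜)) (d : n → ℝ),
      S = Unitary.conjStarAlgAut 𝕜 _ U (diagonal fun i => (d i : 𝕜)) :=
    ⟨_, _, hS.spectral_theorem⟩
  -- Since `0⁻¹ = 0`, inverting the eigenvalues entrywise gives the Moore–Penrose inverse.
  refine ⟨Unitary.conjStarAlgAut 𝕜 _ U (diagonal fun i => ((d i : 𝕜))⁻¹), ?_, ?_, ?_⟩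
  · refine IsSelfAdjoint.map ?_ _
    simp [IsSelfAdjoint, star_eq_conjTranspose, diagonal_conjTranspose, Pi.star_def]
  all_goals
    simp only [← map_mul, diagonal_mul_diagonal, inv_mul_mul_self]
  congr 2
  funext i
  simpa using mul_inv_mul_cancel ((d i : 𝕜))⁻¹

section TraceNorm

variable {n : Type*} [Fintype n] [DecidableEq n]

lemma exists_conjTranspose_mul_eq_matSqrt (X : Matrix n n ℂ) :
    ∃ W : Matrix n n ℂ, Wᴴ * X = matSqrt (Xᴴ * X) ∧ IsStarProjection (W * Wᴴ) := by
  set S := matSqrt (Xᴴ * X)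
  have hS : S * S = Xᴴ * X := matSqrt_mul_self (posSemidef_conjTranspose_mul_self X)
  obtain ⟨B, hB, hBSS, hBSB⟩ := (posSemidef_matSqrt (Xᴴ * X)).1.exists_pseudoinverse
  refine ⟨X * B, ?_, ?_, .mul_star_self _⟩
  · rw [conjTranspose_mul, hB.eq, mul_assoc, ← hS, ← mul_assoc, hBSS]
  · have h : X * B * (X * B)ᴴ * (X * B * (X * B)ᴴ) =
        X * (B * (B * S * S) * B * B) * Xᴴ := by
      rw [conjTranspose_mul, hB.eq, mul_assoc B S S, hS]
      noncomm_ring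
    rw [IsIdempotentElem, h, hBSS, hBSB, conjTranspose_mul, hB.eq]
    noncomm_ring

lemma re_trace_mul_le_sqrt_mul_sqrt (A B : Matrix n n ℂ) :
    (A * B).trace.re ≤ √(A * Aᴴ).trace.re * √(Bᴴ * B).trace.re := by
  let := Matrix.toMatrixSeminormedAddCommGroup (1 : Matrix n n ℂ) .one
  let := Matrix.toMatrixInnerProductSpace (1 : Matrix n n ℂ) .one
  have h := re_inner_le_norm (𝕜 := ℂ) Bᴴ A
  rw [norm_eq_sqrt_re_inner (𝕜 := ℂ) A, norm_eq_sqrt_re_inner (𝕜 := ℂ) Bᴴ] at h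
  change (A * 1 * Bᴴᴴ).trace.re ≤ √(Bᴴ * 1 * Bᴴᴴ).trace.re * √(A * 1 * Aᴴ).trace.re at h
  simpa [mul_comm] using h

lemma traceNorm_mul_le (Y Z : Matrix n n ℂ) :
    traceNorm (Y * Z) ≤ √(Yᴴ * Y).trace.re * √(Zᴴ * Z).trace.re := by
  obtain ⟨W, hW, hP⟩ := exists_conjTranspose_mul_eq_matSqrt (Y * Z)
  have hcontr : (Wᴴ * Y * (Wᴴ * Y)ᴴ).trace.re ≤ (Yᴴ * Y).trace.re := by
    have h := RCLike.nonneg_iff.mp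
      ((nonneg_iff_posSemidef.mp hP.one_sub_nonneg).conjTranspose_mul_mul_same Y).trace_nonneg
    have e : (Wᴴ * Y * (Wᴴ * Y)ᴴ).trace = (Yᴴ * (W * Wᴴ) * Y).trace := by
      rw [conjTranspose_mul, conjTranspose_conjTranspose, mul_assoc, trace_mul_comm,
        mul_assoc, mul_assoc, trace_mul_comm, ← mul_assoc]
    rw [e]
    simpa [mul_sub, sub_mul, trace_sub] using h.1
  calc traceNorm (Y * Z) = (Wᴴ * Y * Z).trace.re := by rw [traceNorm, ← hW, mul_assoc]
    _ ≤ √(Wᴴ * Y * (Wᴴ * Y)ᴴ).trace.re * √(Zᴴ * Z).trace.re :=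
      re_trace_mul_le_sqrt_mul_sqrt _ _
    _ ≤ √(Yᴴ * Y).trace.re * √(Zᴴ * Z).trace.re := by gcongr

lemma rootFidelity_eq_traceNorm {g : Matrix n n ℂ} (hg : g.PosSemidef) (r : Matrix n n ℂ) :
    rootFidelity g r = traceNorm (matSqrt g * matSqrt r) := by
  rw [rootFidelity, traceNorm, conjTranspose_mul, (posSemidef_matSqrt r).1.eq,
    (posSemidef_matSqrt g).1.eq, ← mul_assoc, mul_assoc (matSqrt r) (matSqrt g),
    matSqrt_mul_self hg]

end TraceNorm

theorem fidelity_le_re_trace_mul_of_mul_eq_self {n : Type*} [Fintype n] [DecidableEq n]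
    {g r Q : Matrix n n ℂ}
    (hg : g.PosSemidef) (hgtr : g.trace = 1) (hr : r.PosSemidef) (hQ : IsStarProjection Q)
    (hgQ : g * Q = g) : fidelity g r ≤ (Q * r).trace.re := by
  have hQH : Q.IsHermitian := hQ.isSelfAdjoint
  have hZ : ((Q * matSqrt r)ᴴ * (Q * matSqrt r)).trace = (Q * r).trace := by
    rw [conjTranspose_mul, (posSemidef_matSqrt r).1.eq, hQH.eq, mul_assoc, ← mul_assoc Q Q,
      hQ.isIdempotentElem.eq, trace_mul_comm, mul_assoc, matSqrt_mul_self hr]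
  set Z := Q * matSqrt r
  have hroot : rootFidelity g r ≤ √(Q * r).trace.re := calc
    rootFidelity g r = traceNorm (matSqrt g * Z) := by
      rw [← mul_assoc, matSqrt_mul_eq_self hg hQH hgQ, rootFidelity_eq_traceNorm hg]
    _ ≤ √((matSqrt g)ᴴ * matSqrt g).trace.re * √(Zᴴ * Z).trace.re := traceNorm_mul_le _ _
    _ = √(Q * r).trace.re := by
      rw [(posSemidef_matSqrt g).1.eq, matSqrt_mul_self hg, hgtr, hZ]
      simp
  have h0 : 0 ≤ rootFidelity g r :=
    (RCLike.nonneg_iff.mp (posSemidef_matSqrt _).trace_nonneg).1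
  have hQr : 0 ≤ (Q * r).trace.re :=
    hZ ▸ (RCLike.nonneg_iff.mp (posSemidef_conjTranspose_mul_self Z).trace_nonneg).1
  exact (Real.le_sqrt h0 hQr).mp hroot

lemma isStarProjection_vecMulVec_star {R n : Type*} [Semiring R] [StarRing R] [Fintype n]
    {v : n → R}
    (hv : star v ⬝ᵥ v = 1) : IsStarProjection (vecMulVec v (star v)) where
  isIdempotentElem := by rw [IsIdempotentElem, vecMulVec_mul_vecMulVec, hv, one_smul]
  isSelfAdjoint := by rw [IsSelfAdjoint, star_eq_conjTranspose, conjTranspose_vecMulVec, star_star]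

lemma IsStarProjection.kronecker {R m n : Type*} [CommSemiring R] [StarRing R] [Fintype m]
    [Fintype n] {P : Matrix m m R} {Q : Matrix n n R} (hP : IsStarProjection P) (hQ : IsStarProjection Q) :
    IsStarProjection (P ⊗ₖ Q) where
  isIdempotentElem := by
    rw [IsIdempotentElem, ← mul_kronecker_mul, hP.isIdempotentElem.eq, hQ.isIdempotentElem.eq]
  isSelfAdjoint := by
    rw [IsSelfAdjoint, star_eq_conjTranspose, conjTranspose_kronecker,
      ← star_eq_conjTranspose, ← star_eq_conjTranspose, hP.isSelfAdjoint.star_eq,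
      hQ.isSelfAdjoint.star_eq]

section PrivateState

variable {M K d : ℕ} {U : (Fin M → Fin K) → Matrix (Fin M → Fin d) (Fin M → Fin d) ℂ}

lemma card_filter_exists_forall_eq (hM : 0 < M) :
    (Finset.univ.filter fun f : Fin M → Fin K => ∃ c, ∀ m, f m = c).card = K := by
  have : Nonempty (Fin M) := ⟨⟨0, hM⟩⟩
  have h : (Finset.univ.filter fun f : Fin M → Fin K => ∃ c, ∀ m, f m = c) =
      Finset.univ.map ⟨Function.const (Fin M), Function.const_injective (β := Fin K)⟩ := by
    ext f
    simp [funext_iff, eq_comm]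
  rw [h, Finset.card_map, Finset.card_univ, Fintype.card_fin]

lemma star_ghz_dotProduct_ghz (hM : 0 < M) (hK : 0 < K) :
    star (ghz M K) ⬝ᵥ ghz M K = 1 := by
  have hterm : ∀ f, star (ghz M K f) * ghz M K f =
      if ∃ c, ∀ m, f m = c then ((K : ℂ))⁻¹ else 0 := by
    intro f
    unfold ghz
    split_ifs
    · simp [← mul_inv, ← Complex.ofReal_mul]
    · simp
  simp only [dotProduct, Pi.star_apply, hterm, Finset.sum_ite, Finset.sum_const_zero, add_zero,
    Finset.sum_const, card_filter_exists_forall_eq hM, nsmul_eq_mul]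
  field_simp

lemma isStarProjection_ghzProj (hM : 0 < M) (hK : 0 < K) :
    IsStarProjection (ghzProj M K) :=
  isStarProjection_vecMulVec_star (star_ghz_dotProduct_ghz hM hK)

lemma twist_eq_submatrix_blockDiagonal :
    twist M K d U =
      (blockDiagonal U).submatrix (Equiv.prodComm _ _) (Equiv.prodComm _ _) := by
  ext ⟨f, x⟩ ⟨g, y⟩
  simp [twist, blockDiagonal_apply]

lemma twist_mem_unitaryGroup (hU : ∀ f, U f ∈ unitaryGroup (Fin M → Fin d) ℂ) :
    twist M K d U ∈ unitaryGroup _ ℂ := by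
  have hUU (f) : U f * (U f)ᴴ = 1 := mem_unitaryGroup_iff.mp (hU f)
  rw [mem_unitaryGroup_iff, star_eq_conjTranspose, twist_eq_submatrix_blockDiagonal,
    conjTranspose_submatrix, blockDiagonal_conjTranspose, submatrix_mul_equiv,
    ← blockDiagonal_mul]
  simp only [hUU, ← Pi.one_def, blockDiagonal_one, submatrix_one_equiv]

lemma privateState_eq_conjStarAlgAut (hU : ∀ f, U f ∈ unitaryGroup (Fin M → Fin d) ℂ)
    (ω : Matrix (Fin M → Fin d) (Fin M → Fin d) ℂ) :
    privateState M K d U ω =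
      Unitary.conjStarAlgAut ℂ _ ⟨_, twist_mem_unitaryGroup hU⟩ (ghzProj M K ⊗ₖ ω) :=
  rfl

lemma privacyTest_eq_conjStarAlgAut (hU : ∀ f, U f ∈ unitaryGroup (Fin M → Fin d) ℂ) :
    privacyTest M K d U = Unitary.conjStarAlgAut ℂ _ ⟨_, twist_mem_unitaryGroup hU⟩
      (ghzProj M K ⊗ₖ (1 : Matrix (Fin M → Fin d) (Fin M → Fin d) ℂ)) :=
  rfl

lemma isStarProjection_privacyTest (hM : 0 < M) (hK : 0 < K)
    (hU : ∀ f, U f ∈ unitaryGroup (Fin M → Fin d) ℂ) :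
    IsStarProjection (privacyTest M K d U) := by
  rw [privacyTest_eq_conjStarAlgAut hU]
  exact ((isStarProjection_ghzProj hM hK).kronecker (.one _)).map _

lemma posSemidef_privateState {ω : Matrix (Fin M → Fin d) (Fin M → Fin d) ℂ}
    (hω : ω.PosSemidef) : (privateState M K d U ω).PosSemidef :=
  ((posSemidef_vecMulVec_self_star _).kronecker hω).mul_mul_conjTranspose_same _

lemma trace_privateState (hM : 0 < M) (hK : 0 < K)
    (hU : ∀ f, U f ∈ unitaryGroup (Fin M → Fin d) ℂ)
    {ω : Matrix (Fin M → Fin d) (Fin M → Fin d) ℂ} (hω : ω.trace = 1) :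
    (privateState M K d U ω).trace = 1 := by
  rw [privateState, trace_mul_cycle, ← star_eq_conjTranspose,
    mem_unitaryGroup_iff'.mp (twist_mem_unitaryGroup hU), one_mul, trace_kronecker, hω, mul_one,
    ghzProj, trace_vecMulVec, dotProduct_comm]
  exact star_ghz_dotProduct_ghz hM hK

lemma privateState_mul_privacyTest (hM : 0 < M) (hK : 0 < K)
    (hU : ∀ f, U f ∈ unitaryGroup (Fin M → Fin d) ℂ)
    (ω : Matrix (Fin M → Fin d) (Fin M → Fin d) ℂ) :
    privateState M K d U ω * privacyTest M K d U = privateState M K d U ω := by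
  rw [privateState_eq_conjStarAlgAut hU, privacyTest_eq_conjStarAlgAut hU, ← map_mul,
    ← mul_kronecker_mul, (isStarProjection_ghzProj hM hK).isIdempotentElem.eq, mul_one]

end PrivateState

theorem stmt_2_general (M K d : ℕ) (hM : 2 ≤ M) (hK : 1 ≤ K)
    (U : (Fin M → Fin K) → Matrix (Fin M → Fin d) (Fin M → Fin d) ℂ)
    (hU : ∀ f, U f ∈ Matrix.unitaryGroup (Fin M → Fin d) ℂ)
    (ω : Matrix (Fin M → Fin d) (Fin M → Fin d) ℂ)
    (hω : ω.PosSemidef) (hωtr : ω.trace = 1)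
    (ρ : Matrix ((Fin M → Fin K) × (Fin M → Fin d))
      ((Fin M → Fin K) × (Fin M → Fin d)) ℂ)
    (hρ : ρ.PosSemidef) :
    fidelity (privateState M K d U ω) ρ ≤ (privacyTest M K d U * ρ).trace.re ∧
    ∀ ε : ℝ, 0 ≤ ε → ε ≤ 1 → 1 - ε ≤ fidelity (privateState M K d U ω) ρ →
      1 - ε ≤ (privacyTest M K d U * ρ).trace.re := by
  have hM₀ : 0 < M := by omega
  have hF : fidelity (privateState M K d U ω) ρ ≤ (privacyTest M K d U * ρ).trace.re :=
    fidelity_le_re_trace_mul_of_mul_eq_self (posSemidef_privateState hω)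
      (trace_privateState hM₀ hK hU hωtr) hρ (isStarProjection_privacyTest hM₀ hK hU)
      (privateState_mul_privacyTest hM₀ hK hU ω)
  exact ⟨hF, fun ε _ _ hε => hε.trans hF⟩

/-- Any density matrix passes the `γ`-privacy test with probability at
least the fidelity `F(γ, ρ)`; in particular approximate private states pass with
probability at least `1 - ε`. -/
theorem stmt_2 (M K d : ℕ) (hM : 2 ≤ M) (hK : 1 ≤ K) (hd : 1 ≤ d)
    (U : (Fin M → Fin K) → Matrix (Fin M → Fin d) (Fin M → Fin d) ℂ)
    (hU : ∀ f, U f ∈ Matrix.unitaryGroup (Fin M → Fin d) ℂ)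
    (ω : Matrix (Fin M → Fin d) (Fin M → Fin d) ℂ)
    (hω : ω.PosSemidef) (hωtr : ω.trace = 1)
    (ρ : Matrix ((Fin M → Fin K) × (Fin M → Fin d))
      ((Fin M → Fin K) × (Fin M → Fin d)) ℂ)
    (hρ : ρ.PosSemidef) (hρtr : ρ.trace = 1) :
    fidelity (privateState M K d U ω) ρ ≤ (privacyTest M K d U * ρ).trace.re ∧
    ∀ ε : ℝ, 0 ≤ ε → ε ≤ 1 → 1 - ε ≤ fidelity (privateState M K d U ω) ρ →
      1 - ε ≤ (privacyTest M K d U * ρ).trace.re :=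
  stmt_2_general M K d hM hK U hU ω hω hωtr ρ hρ
end

section
/- Let ρ and σ be density matrices on Fin n and let Λ be a test. Then √F(ρ,σ) ≤ √( Re Tr[Λ·ρ] · Re Tr[Λ·σ] ) + √( Re Tr[(1−Λ)·ρ] · Re Tr[(1−Λ)·σ] ). (The root fidelity is bounded above by the classical root fidelity of the outcome distributions of any binary measurement {Λ, 1−Λ}.) -/
open Matrix Kronecker
open scoped ComplexOrder

/-! The root fidelity is the trace norm `Tr |√ρ √σ|`. Polar decomposition gives a contraction `W`
with `Wᴴ (√ρ √σ) = |√ρ √σ|`; splitting `√ρ √σ = √ρ Λ √σ + √ρ (1 - Λ) √σ`, each summand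
`Re Tr[Wᴴ √ρ Λ √σ]` is the Hilbert–Schmidt pairing of `√Λ √ρ W` with `√Λ √σ`, so Cauchy–Schwarz
bounds it by `√(Tr[Λ ρ] Tr[Λ σ])`, using `W Wᴴ ≤ 1` for the first factor. -/

open scoped MatrixOrder

namespace Matrix

variable {𝕜 m n : Type*} [RCLike 𝕜] [Fintype m] [Fintype n]

lemma re_trace_conjTranspose_mul_le (X Y : Matrix m n 𝕜) :
    RCLike.re (Xᴴ * Y).trace ≤ √(RCLike.re (Xᴴ * X).trace) * √(RCLike.re (Yᴴ * Y).trace) := by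
  have trace_eq_inner (A B : Matrix m n 𝕜) : (Aᴴ * B).trace =
      inner 𝕜 (WithLp.toLp 2 A.vec : EuclideanSpace 𝕜 (n × m)) (WithLp.toLp 2 B.vec) := by
    rw [EuclideanSpace.inner_eq_star_dotProduct, dotProduct_comm, ← star_vec_dotProduct_vec]
  simp only [trace_eq_inner, ← norm_eq_sqrt_re_inner]
  exact re_inner_le_norm _ _

lemma re_trace_le_re_trace {A B : Matrix n n 𝕜} (h : A ≤ B) :
    RCLike.re A.trace ≤ RCLike.re B.trace := by
  have := (RCLike.nonneg_iff.mp (le_iff.mp h).trace_nonneg).1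
  rwa [trace_sub, map_sub, sub_nonneg] at this

variable [DecidableEq n]

lemma conjTranspose_cfcSqrt (A : Matrix n n 𝕜) : (CFC.sqrt A)ᴴ = CFC.sqrt A :=
  (CFC.sqrt_nonneg A).isSelfAdjoint

lemma re_trace_conjTranspose_mul_mul_le {M W : Matrix n n 𝕜} (hM : 0 ≤ M) (hW : W * Wᴴ ≤ 1) :
    RCLike.re (Wᴴ * M * W).trace ≤ RCLike.re M.trace := by
  have h := star_left_conjugate_le_conjugate hW (CFC.sqrt M)
  rw [mul_one, star_eq_conjTranspose, conjTranspose_cfcSqrt, CFC.sqrt_mul_sqrt_self M] at h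
  calc RCLike.re (Wᴴ * M * W).trace
      = RCLike.re ((Wᴴ * CFC.sqrt M) * (CFC.sqrt M * W)).trace := by
        rw [mul_assoc _ (CFC.sqrt M), ← mul_assoc (CFC.sqrt M), CFC.sqrt_mul_sqrt_self M,
          mul_assoc]
    _ = RCLike.re (CFC.sqrt M * (W * Wᴴ) * CFC.sqrt M).trace := by
        rw [trace_mul_comm]; simp only [mul_assoc]
    _ ≤ RCLike.re M.trace := re_trace_le_re_trace h

lemma exists_contraction_conjTranspose_mul_eq_abs (A : Matrix n n 𝕜) :
    ∃ W : Matrix n n 𝕜, W * Wᴴ ≤ 1 ∧ Wᴴ * A = CFC.abs A := by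
  set C := CFC.abs A
  -- `D` is the Moore–Penrose pseudo-inverse of `C`, because `(0 : ℝ)⁻¹ = 0`.
  set D := cfc (·⁻¹ : ℝ → ℝ) C
  have hD : Dᴴ = D := (cfc_predicate _ C : IsSelfAdjoint D)
  have hAA : Aᴴ * A = C * C := (CFC.abs_mul_abs A).symm
  have cont (f : ℝ → ℝ) : ContinuousOn f (spectrum ℝ C) := (Set.toFinite _).continuousOn f
  have hmul (f g : ℝ → ℝ) : cfc f C * cfc g C = cfc (fun x ↦ f x * g x) C :=
    (cfc_mul f g C (cont f) (cont g)).symm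
  have hDCC : D * C * C = C := by
    calc D * C * C = D * cfc (fun x ↦ x) C * cfc (fun x ↦ x) C := by rw [cfc_id' ℝ C]
      _ = C := by rw [hmul, hmul]; simp only [inv_mul_mul_self]; exact cfc_id' ℝ C
  have hDCD : D * C * D = D := by
    calc D * C * D = D * cfc (fun x ↦ x) C * D := by rw [cfc_id' ℝ C]
      _ = D := by
        have hinv (x : ℝ) : x⁻¹ * x * x⁻¹ = x⁻¹ := by simpa using mul_inv_mul_cancel x⁻¹
        rw [hmul, hmul]; simp only [hinv, D]
  set W := A * D
  have hWA : Wᴴ * A = C := by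
    rw [conjTranspose_mul, hD, mul_assoc, hAA, ← mul_assoc, hDCC]
  have hWWW : W * (Wᴴ * W) = W := by
    rw [← mul_assoc Wᴴ, hWA, mul_assoc, ← mul_assoc D, hDCD]
  have hP : IsStarProjection (W * Wᴴ) :=
    ⟨by rw [IsIdempotentElem, mul_assoc, ← mul_assoc Wᴴ, ← mul_assoc, hWWW],
      IsSelfAdjoint.mul_star_self W⟩
  exact ⟨W, hP.le_one, hWA⟩

lemma re_trace_conjTranspose_mul_sqrt_mul_sqrt_le {ρ σ Λ W : Matrix n n 𝕜} (hρ : 0 ≤ ρ)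
    (hσ : 0 ≤ σ) (hΛ : 0 ≤ Λ) (hW : W * Wᴴ ≤ 1) :
    RCLike.re (Wᴴ * (CFC.sqrt ρ * Λ * CFC.sqrt σ)).trace
      ≤ √(RCLike.re (Λ * ρ).trace * RCLike.re (Λ * σ).trace) := by
  set X := CFC.sqrt Λ * CFC.sqrt ρ * W
  set Y := CFC.sqrt Λ * CFC.sqrt σ
  have hXh : Xᴴ = Wᴴ * CFC.sqrt ρ * CFC.sqrt Λ := by
    simp only [X, conjTranspose_mul, conjTranspose_cfcSqrt, mul_assoc]
  have hXY : Xᴴ * Y = Wᴴ * (CFC.sqrt ρ * Λ * CFC.sqrt σ) := by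
    rw [hXh]; simp only [Y, mul_assoc]
    rw [← mul_assoc (CFC.sqrt Λ) (CFC.sqrt Λ), CFC.sqrt_mul_sqrt_self Λ]
  have hXX : RCLike.re (Xᴴ * X).trace ≤ RCLike.re (Λ * ρ).trace := by
    have hXX' : Xᴴ * X = Wᴴ * (CFC.sqrt ρ * Λ * CFC.sqrt ρ) * W := by
      rw [hXh]; simp only [X, mul_assoc]
      rw [← mul_assoc (CFC.sqrt Λ) (CFC.sqrt Λ), CFC.sqrt_mul_sqrt_self Λ]
    have hM : 0 ≤ CFC.sqrt ρ * Λ * CFC.sqrt ρ := by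
      simpa only [conjTranspose_cfcSqrt] using
        (hΛ.posSemidef.conjTranspose_mul_mul_same (CFC.sqrt ρ)).nonneg
    rw [hXX']
    refine (re_trace_conjTranspose_mul_mul_le hM hW).trans_eq ?_
    rw [mul_assoc, trace_mul_comm, mul_assoc, CFC.sqrt_mul_sqrt_self ρ]
  have hYY : (Yᴴ * Y).trace = (Λ * σ).trace := by
    rw [conjTranspose_mul, conjTranspose_cfcSqrt, conjTranspose_cfcSqrt, mul_assoc,
      ← mul_assoc (CFC.sqrt Λ), CFC.sqrt_mul_sqrt_self Λ, trace_mul_comm, mul_assoc,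
      CFC.sqrt_mul_sqrt_self σ]
  calc RCLike.re (Wᴴ * (CFC.sqrt ρ * Λ * CFC.sqrt σ)).trace = RCLike.re (Xᴴ * Y).trace := by
        rw [hXY]
    _ ≤ √(RCLike.re (Xᴴ * X).trace) * √(RCLike.re (Yᴴ * Y).trace) :=
        re_trace_conjTranspose_mul_le X Y
    _ ≤ √(RCLike.re (Λ * ρ).trace) * √(RCLike.re (Λ * σ).trace) := by
        rw [hYY]; gcongr
    _ = √(RCLike.re (Λ * ρ).trace * RCLike.re (Λ * σ).trace) := by
        refine (Real.sqrt_mul' _ ?_).symm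
        rw [← hYY]
        exact (RCLike.nonneg_iff.mp (posSemidef_conjTranspose_mul_self Y).trace_nonneg).1

end Matrix

variable {n : Type*} [Fintype n] [DecidableEq n]

lemma matSqrt_eq_cfcSqrt {A : Matrix n n ℂ} (hA : A.PosSemidef) : matSqrt A = CFC.sqrt A := by
  rw [CFC.sqrt_eq_real_sqrt A hA.nonneg, cfcₙ_eq_cfc, hA.1.cfc_eq, IsHermitian.cfc,
    Unitary.conjStarAlgAut_apply, matSqrt, dif_pos hA]
  rfl

lemma rootFidelity_eq_re_trace_abs {ρ σ : Matrix n n ℂ} (hρ : ρ.PosSemidef)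
    (hσ : σ.PosSemidef) :
    rootFidelity ρ σ = (CFC.abs (CFC.sqrt ρ * CFC.sqrt σ)).trace.re := by
  have hstar : (CFC.sqrt ρ * CFC.sqrt σ)ᴴ * (CFC.sqrt ρ * CFC.sqrt σ)
      = CFC.sqrt σ * ρ * CFC.sqrt σ := by
    rw [conjTranspose_mul, conjTranspose_cfcSqrt, conjTranspose_cfcSqrt, mul_assoc,
      ← mul_assoc (CFC.sqrt ρ), CFC.sqrt_mul_sqrt_self ρ hρ.nonneg, ← mul_assoc]
  have hB : (CFC.sqrt σ * ρ * CFC.sqrt σ).PosSemidef :=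
    hstar ▸ posSemidef_conjTranspose_mul_self _
  rw [rootFidelity, matSqrt_eq_cfcSqrt hσ, matSqrt_eq_cfcSqrt hB, CFC.abs]
  exact congrArg (fun B ↦ (CFC.sqrt B).trace.re) hstar.symm

theorem stmt_6_general (n : ℕ) (ρ σ : Matrix (Fin n) (Fin n) ℂ)
    (hρ : ρ.PosSemidef)
    (hσ : σ.PosSemidef)
    (Λ : Matrix (Fin n) (Fin n) ℂ) (hΛ : Λ.PosSemidef) (hΛ' : (1 - Λ).PosSemidef) :
    rootFidelity ρ σ ≤
      Real.sqrt ((Λ * ρ).trace.re * (Λ * σ).trace.re) +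
        Real.sqrt (((1 - Λ) * ρ).trace.re * ((1 - Λ) * σ).trace.re) := by
  obtain ⟨W, hW, hWA⟩ := exists_contraction_conjTranspose_mul_eq_abs (CFC.sqrt ρ * CFC.sqrt σ)
  have hsplit : CFC.sqrt ρ * CFC.sqrt σ
      = CFC.sqrt ρ * Λ * CFC.sqrt σ + CFC.sqrt ρ * (1 - Λ) * CFC.sqrt σ := by
    noncomm_ring
  rw [rootFidelity_eq_re_trace_abs hρ hσ, ← hWA, hsplit, mul_add, trace_add, Complex.add_re]
  exact add_le_add
    (re_trace_conjTranspose_mul_sqrt_mul_sqrt_le hρ.nonneg hσ.nonneg hΛ.nonneg hW)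
    (re_trace_conjTranspose_mul_sqrt_mul_sqrt_le hρ.nonneg hσ.nonneg hΛ'.nonneg hW)

/-- the root fidelity is bounded by the classical root fidelity of the
outcome distributions of any binary measurement `{Λ, 1−Λ}`. -/
theorem stmt_6 (n : ℕ) (ρ σ : Matrix (Fin n) (Fin n) ℂ)
    (hρ : ρ.PosSemidef) (hρtr : ρ.trace = 1)
    (hσ : σ.PosSemidef) (hσtr : σ.trace = 1)
    (Λ : Matrix (Fin n) (Fin n) ℂ) (hΛ : Λ.PosSemidef) (hΛ' : (1 - Λ).PosSemidef) :
    rootFidelity ρ σ ≤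
      Real.sqrt ((Λ * ρ).trace.re * (Λ * σ).trace.re) +
        Real.sqrt (((1 - Λ) * ρ).trace.re * ((1 - Λ) * σ).trace.re) :=
  stmt_6_general n ρ σ hρ hσ Λ hΛ hΛ'
end

section
/- Let ρ and σ be density matrices on Fin n, let λ ∈ ℝ be such that 2^λ • σ − ρ is positive semidefinite, and let ε ∈ [0,1). Then every test Λ with Re Tr[Λ·ρ] ≥ 1 − ε satisfies Re Tr[Λ·σ] ≥ (1 − ε) · 2^(−λ). Consequently D_h^ε(ρ‖σ) ≤ λ + log₂(1/(1 − ε)); this is the relation D_h^ε(ρ‖σ) ≤ D_max(ρ‖σ) + log₂(1/(1−ε)). -/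
open Matrix Kronecker
open scoped ComplexOrder

open scoped MatrixOrder in
theorem Matrix.PosSemidef.trace_mul_nonneg {n : Type*} [Fintype n] [DecidableEq n]
    {A B : Matrix n n ℂ} (hA : A.PosSemidef) (hB : B.PosSemidef) :
    0 ≤ (A * B).trace := by
  have hsqrt : CFC.sqrt A * CFC.sqrt A = A := CFC.sqrt_mul_sqrt_self A hA.nonneg
  have hself : (CFC.sqrt A)ᴴ = CFC.sqrt A := (CFC.sqrt_nonneg A).isSelfAdjoint
  calc (0 : ℂ) ≤ (CFC.sqrt A * B * (CFC.sqrt A)ᴴ).trace :=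
        (hB.mul_mul_conjTranspose_same _).trace_nonneg
    _ = (A * B).trace := by rw [hself, trace_mul_cycle, hsqrt]

theorem Matrix.PosSemidef.re_trace_mul_le_of_posSemidef_smul_sub {n : Type*} [Fintype n]
    [DecidableEq n] {Λ ρ σ : Matrix n n ℂ} {c : ℝ} (hΛ : Λ.PosSemidef)
    (h : (c • σ - ρ).PosSemidef) :
    (Λ * ρ).trace.re ≤ c * (Λ * σ).trace.re := by
  have hre := (Complex.nonneg_iff.mp (hΛ.trace_mul_nonneg h)).1
  rw [Matrix.mul_sub, trace_sub, Matrix.mul_smul, trace_smul, Complex.sub_re,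
    Complex.real_smul, Complex.re_ofReal_mul] at hre
  linarith

theorem one_mem_testValues {n : Type*} [Fintype n] [DecidableEq n] {ρ σ : Matrix n n ℂ}
    (hρtr : ρ.trace = 1) (hσtr : σ.trace = 1) {ε : ℝ} (hε : 0 ≤ ε) :
    (1 : ℝ) ∈ testValues ρ σ ε :=
  ⟨1, .one, by simpa using PosSemidef.zero, by simp [hρtr, hε], by simp [hσtr]⟩

theorem Dh_le_neg_logb_of_forall_le {n : Type*} [Fintype n] [DecidableEq n]
    {ρ σ : Matrix n n ℂ} {ε c : ℝ} (hne : (testValues ρ σ ε).Nonempty) (hc : 0 < c)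
    (h : ∀ x ∈ testValues ρ σ ε, c ≤ x) :
    Dh ρ σ ε ≤ -Real.logb 2 c :=
  neg_le_neg <| Real.logb_le_logb_of_le one_lt_two hc (le_csInf hne h)

theorem stmt_11_general (n : ℕ) (ρ σ : Matrix (Fin n) (Fin n) ℂ)
    (hρtr : ρ.trace = 1) (hσtr : σ.trace = 1)
    (lam : ℝ) (hlam : ((2 : ℝ) ^ lam • σ - ρ).PosSemidef)
    (ε : ℝ) (hε0 : 0 ≤ ε) (hε1 : ε < 1) :
    (∀ Λ : Matrix (Fin n) (Fin n) ℂ, Λ.PosSemidef → (1 - Λ).PosSemidef →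
        1 - ε ≤ (Λ * ρ).trace.re →
        (1 - ε) * (2 : ℝ) ^ (-lam) ≤ (Λ * σ).trace.re) ∧
    Dh ρ σ ε ≤ lam + Real.logb 2 (1 / (1 - ε)) := by
  have hε : 0 < 1 - ε := by linarith
  have htest : ∀ Λ : Matrix (Fin n) (Fin n) ℂ, Λ.PosSemidef → (1 - Λ).PosSemidef →
      1 - ε ≤ (Λ * ρ).trace.re → (1 - ε) * (2 : ℝ) ^ (-lam) ≤ (Λ * σ).trace.re := by
    intro Λ hΛ _ hΛρ
    have hρσ := hΛ.re_trace_mul_le_of_posSemidef_smul_sub hlam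
    rw [Real.rpow_neg zero_le_two, ← div_eq_mul_inv, div_le_iff₀ (by positivity)]
    linarith
  refine ⟨htest, ?_⟩
  calc Dh ρ σ ε ≤ -Real.logb 2 ((1 - ε) * (2 : ℝ) ^ (-lam)) :=
        Dh_le_neg_logb_of_forall_le ⟨1, one_mem_testValues hρtr hσtr hε0⟩ (by positivity)
          fun _ ⟨Λ, hΛ, hΛ₁, hΛρ, hx⟩ => hx ▸ htest Λ hΛ hΛ₁ hΛρ
    _ = lam + Real.logb 2 (1 / (1 - ε)) := by
        rw [Real.logb_mul hε.ne' (by positivity), Real.logb_rpow two_pos (by norm_num),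
          one_div, Real.logb_inv]
        ring

/-- `D_h^ε(ρ‖σ) ≤ D_max(ρ‖σ) + log₂(1/(1−ε))`, together with the
underlying per-test estimate. -/
theorem stmt_11 (n : ℕ) (ρ σ : Matrix (Fin n) (Fin n) ℂ)
    (hρ : ρ.PosSemidef) (hρtr : ρ.trace = 1)
    (hσ : σ.PosSemidef) (hσtr : σ.trace = 1)
    (lam : ℝ) (hlam : ((2 : ℝ) ^ lam • σ - ρ).PosSemidef)
    (ε : ℝ) (hε0 : 0 ≤ ε) (hε1 : ε < 1) :
    (∀ Λ : Matrix (Fin n) (Fin n) ℂ, Λ.PosSemidef → (1 - Λ).PosSemidef →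
        1 - ε ≤ (Λ * ρ).trace.re →
        (1 - ε) * (2 : ℝ) ^ (-lam) ≤ (Λ * σ).trace.re) ∧
    Dh ρ σ ε ≤ lam + Real.logb 2 (1 / (1 - ε)) :=
  stmt_11_general n ρ σ hρtr hσtr lam hlam ε hε0 hε1
end
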